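/- arXiv:1210.3141 — 7 statements merged into one kernel-verified Lean document; each statement's English description precedes it below -/
import Mathlib

section
/- Gordan's Lemma: For any real matrix A (with rows a_1, ..., a_m in ℝ^k), exactly one of the following holds: (1) there exists a nonzero vector x ∈ ℝ^m with nonnegative entries such that xᵀA = 0, or (2) there exists a vector y ∈ ℝ^k such that a_i · y < 0 for every row a_i. -/
/-!
If `0` lies in the convex hull of the rows, its convex weights give the nonnegative nonzero
solution. Otherwise the convex hull, being compact, is strictly separated from `0` by a linear
functional, whose coordinates form `y`. Both cannot hold: pairing `x` with `y` would give
`0 = ∑ i, x i * (a i ⬝ᵥ y) < 0`.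
-/

open Set

section Gordan

variable {ι E : Type*} [Fintype ι] [AddCommGroup E] [Module ℝ E]

theorem convexHull_range_eq_image_stdSimplex (a : ι → E) :
    convexHull ℝ (range a) = Fintype.linearCombination ℝ a '' stdSimplex ℝ ι := by
  classical
  rw [← convexHull_rangle_single_eq_stdSimplex, LinearMap.image_convexHull, ← range_comp]
  congr 2
  ext i
  simp [Fintype.linearCombination_apply_single]

theorem exists_nonneg_ne_zero_sum_smul_eq_zero_of_zero_mem_convexHull {a : ι → E}
    (h : 0 ∈ convexHull ℝ (range a)) :
    ∃ x : ι → ℝ, 0 ≤ x ∧ x ≠ 0 ∧ ∑ i, x i • a i = 0 := by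
  rw [convexHull_range_eq_image_stdSimplex] at h
  obtain ⟨x, ⟨hx0, hx1⟩, hxa⟩ := h
  refine ⟨x, hx0, ?_, by rwa [Fintype.linearCombination_apply] at hxa⟩
  rintro rfl
  simp at hx1

theorem exists_strongDual_neg_of_zero_notMem_convexHull [TopologicalSpace E]
    [IsTopologicalAddGroup E] [ContinuousSMul ℝ E] [LocallyConvexSpace ℝ E] [T2Space E]
    {a : ι → E} (h : 0 ∉ convexHull ℝ (range a)) :
    ∃ f : StrongDual ℝ E, ∀ i, f (a i) < 0 := by
  obtain ⟨f, u, hf, hu⟩ := geometric_hahn_banach_closed_point (convex_convexHull ℝ _)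
    ((finite_range a).isClosed_convexHull ℝ) h
  rw [map_zero] at hu
  exact ⟨f, fun i => (hf _ (subset_convexHull ℝ _ (mem_range_self i))).trans hu⟩

theorem exists_nonneg_apply_of_sum_smul_eq_zero (f : E →ₗ[ℝ] ℝ) {a : ι → E} {x : ι → ℝ}
    (hx0 : 0 ≤ x) (hx : x ≠ 0) (hxa : ∑ i, x i • a i = 0) : ∃ i, 0 ≤ f (a i) := by
  by_contra! hf
  obtain ⟨i₀, hi₀⟩ := Function.ne_iff.1 hx
  have : ∑ i, x i * f (a i) < 0 :=
    Finset.sum_neg' (fun i _ => mul_nonpos_of_nonneg_of_nonpos (hx0 i) (hf i).le)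
      ⟨i₀, Finset.mem_univ _, mul_neg_of_pos_of_neg ((hx0 i₀).lt_of_ne' hi₀) (hf i₀)⟩
  simp_rw [← smul_eq_mul, ← map_smul, ← map_sum, hxa, map_zero] at this
  exact this.false

theorem gordan_alternative [TopologicalSpace E]
    [IsTopologicalAddGroup E] [ContinuousSMul ℝ E] [LocallyConvexSpace ℝ E] [T2Space E]
    (a : ι → E) :
    Xor (∃ x : ι → ℝ, 0 ≤ x ∧ x ≠ 0 ∧ ∑ i, x i • a i = 0)
      (∃ f : StrongDual ℝ E, ∀ i, f (a i) < 0) := by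
  refine xor_iff_iff_not.2 ⟨?_, fun hnf => ?_⟩
  · rintro ⟨x, hx0, hx, hxa⟩ ⟨f, hf⟩
    obtain ⟨i, hi⟩ := exists_nonneg_apply_of_sum_smul_eq_zero f.toLinearMap hx0 hx hxa
    exact (hf i).not_ge hi
  · refine exists_nonneg_ne_zero_sum_smul_eq_zero_of_zero_mem_convexHull (by_contra fun h0 => ?_)
    exact hnf (exists_strongDual_neg_of_zero_notMem_convexHull h0)

end Gordan

theorem exists_strongDual_neg_iff_exists_sum_mul_neg {ι κ : Type*} [Fintype κ]
    (a : ι → κ → ℝ) :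
    (∃ f : StrongDual ℝ (κ → ℝ), ∀ i, f (a i) < 0) ↔ ∃ y : κ → ℝ, ∀ i, ∑ t, a i t * y t < 0 := by
  classical
  constructor
  · rintro ⟨f, hf⟩
    refine ⟨fun t => f fun s => if t = s then 1 else 0, fun i => ?_⟩
    have hfa := f.toLinearMap.pi_apply_eq_sum_univ (a i)
    simp only [ContinuousLinearMap.coe_coe, smul_eq_mul] at hfa
    exact hfa ▸ hf i
  · rintro ⟨y, hy⟩
    refine ⟨LinearMap.toContinuousLinearMap (Fintype.linearCombination ℝ y), fun i => ?_⟩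
    simpa [Fintype.linearCombination_apply] using hy i

theorem stmt_2 {m k : ℕ} (a : Fin m → Fin k → ℝ) :
    Xor' (∃ x : Fin m → ℝ, (∀ i, 0 ≤ x i) ∧ x ≠ 0 ∧ ∀ t, ∑ i, x i * a i t = 0)
      (∃ y : Fin k → ℝ, ∀ i, ∑ t, a i t * y t < 0) := by
  rw [← exists_strongDual_neg_iff_exists_sum_mul_neg]
  have := gordan_alternative a
  simp only [Pi.le_def, funext_iff, Finset.sum_apply, Pi.smul_apply, smul_eq_mul,
    Pi.zero_apply] at this
  exact this
end

section
/- Let v_1, ..., v_m be vectors in ℤ^k with all entries of absolute value at most N, and suppose there exists λ₀ ∈ ℝ^k with v_i · λ₀ < 0 for all i. Then there exists an integer vector λ ∈ ℤ^k with every coordinate of absolute value at most (k·N)^{k+1} such that v_i · λ ≤ -1 for all i. -/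
/-!
Let `p` be the point of the convex hull of the `vᵢ` nearest to the origin. The hull lies in the
open half-space `{x | x ⬝ λ₀ < 0}`, so `p ≠ 0`, and the projection inequality gives
`vᵢ ⬝ p ≥ ‖p‖²` for all `i`, with equality for the `vᵢ` carrying weight in `p`. Those `vᵢ` all
satisfy `vᵢ ⬝ (p / ‖p‖²) = 1`; Cramer's rule on an invertible maximal minor turns this real
solution into an integer `g` with `|g_t| ≤ k! Nᵏ` and `vᵢ ⬝ g = d ≠ 0` for all of them, hence
`g ⬝ p = d` and `1 ≤ |g ⬝ p| ≤ k · k! Nᵏ · ‖p‖`. So `μ = -p / ‖p‖²` satisfies `vᵢ ⬝ μ ≤ -1` and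
`|μ_t| ≤ 1 / ‖p‖ ≤ k · k! Nᵏ`, and rounding `k N μ` coordinatewise changes each `vᵢ ⬝ (k N μ)` by at
most `k N / 2`, which yields the integral solution with `|λ_t| ≤ (k N)^(k+1)`.
-/

open Matrix
open scoped Nat RealInnerProductSpace

theorem Nat.mul_factorial_le_pow (k : ℕ) : k * k ! ≤ k ^ k := by
  rcases k with _ | k
  · simp
  have h := Nat.factorial_mul_descFactorial (Nat.le_succ k)
  rw [Nat.succ_sub (le_refl k), Nat.sub_self, Nat.factorial_one, one_mul] at h
  rw [pow_succ', ← h]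
  exact Nat.mul_le_mul_left _ (Nat.descFactorial_le_pow _ _)

theorem Matrix.abs_cramer_apply_le {R n : Type*} [CommRing R] [LinearOrder R]
    [IsStrictOrderedRing R] [Fintype n] [DecidableEq n] {M : Matrix n n R} {b : n → R} {B : R}
    (hM : ∀ i j, |M i j| ≤ B) (hb : ∀ i, |b i| ≤ B) (j : n) :
    |M.cramer b j| ≤ (Fintype.card n)! * B ^ Fintype.card n := by
  rw [cramer_apply, ← nsmul_eq_mul]
  refine det_le (abv := AbsoluteValue.abs) fun i j' => ?_
  rw [updateCol_apply]
  split_ifs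
  exacts [hb i, hM i j']

theorem Matrix.exists_isUnit_submatrix_of_linearIndependent {K m n : Type*} [Field K]
    [Fintype m] [Fintype n] [DecidableEq m] {A : Matrix m n K} (hA : LinearIndependent K A.row) :
    ∃ c : m ↪ n, IsUnit (A.submatrix id c) := by
  obtain ⟨s, -, -, hspan, hli⟩ :=
    exists_linearIndepOn_extension (linearIndepOn_empty K A.col) (Set.empty_subset Set.univ)
  rw [Set.image_univ] at hspan
  have hrank : Set.finrank K (Set.range fun j : s => A.col j) = Fintype.card m := by
    rw [← hA.rank_matrix, rank_eq_finrank_span_cols, Set.finrank, ← Set.image_eq_range,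
      le_antisymm (Submodule.span_mono (Set.image_subset_range _ _)) (Submodule.span_le.mpr hspan)]
  obtain ⟨e⟩ : Nonempty (m ≃ s) := by
    classical
    exact ⟨Fintype.equivOfCardEq
      ((linearIndependent_iff_card_eq_finrank_span.mp hli).trans hrank).symm⟩
  refine ⟨e.toEmbedding.trans (Function.Embedding.subtype _), ?_⟩
  rw [← linearIndependent_cols_iff_isUnit]
  exact hli.comp e e.injective

theorem Matrix.mulVec_eq_smul_one_of_subset_span {K ι n : Type*} [Field K] [Fintype n]
    {A : Matrix ι n K} {s : Set ι} (hs : Set.range A.row ⊆ Submodule.span K (A.row '' s))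
    {p x : n → K} (hp : A *ᵥ p = 1) {d : K} (hx : ∀ i ∈ s, (A *ᵥ x) i = d) :
    A *ᵥ x = d • 1 := by
  have hlin : ∀ y ∈ Submodule.span K (A.row '' s), y ⬝ᵥ x = d * (y ⬝ᵥ p) := by
    intro y hy
    induction hy using Submodule.span_induction with
    | mem y hy =>
      obtain ⟨i, hi, rfl⟩ := hy
      have hpi : A i ⬝ᵥ p = 1 := congrFun hp i
      rw [row, hpi, mul_one]
      exact hx i hi
    | zero => simp
    | add y z _ _ hy hz => rw [add_dotProduct, add_dotProduct, hy, hz, mul_add]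
    | smul a y _ hy => rw [smul_dotProduct, smul_dotProduct, hy, smul_eq_mul, smul_eq_mul]; ring
  ext i
  rw [Pi.smul_apply, ← congrFun hp i]
  exact hlin (A i) (hs ⟨i, rfl⟩)

theorem Matrix.mulVec_extend_zero {R m n l : Type*} [CommSemiring R] [Fintype n] [Fintype l]
    (A : Matrix m n R) (c : l ↪ n) (y : l → R) :
    A *ᵥ Function.extend c y 0 = A.submatrix id c *ᵥ y := by
  ext i
  refine (Fintype.sum_of_injective c c.injective _ _ (fun j hj => ?_) (fun j => ?_)).symm
  · rw [Function.extend_apply' _ _ _ hj, Pi.zero_apply, mul_zero]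
  · rw [c.injective.extend_apply]
    rfl

theorem Matrix.exists_int_mulVec_eq_smul_one {K ι n : Type*} [Field K] [CharZero K]
    [Fintype n] [DecidableEq n] {W : Matrix ι n ℤ} {N : ℕ} (hN : 1 ≤ N)
    (hW : ∀ i j, |W i j| ≤ N) (h : ∃ p : n → K, W.map (↑) *ᵥ p = 1) :
    ∃ (g : n → ℤ) (d : ℤ), d ≠ 0 ∧ (∀ j, |g j| ≤ (Fintype.card n)! * N ^ Fintype.card n) ∧
      W *ᵥ g = d • 1 := by
  classical
  obtain ⟨p, hp⟩ := h
  -- `s` indexes a basis of the row space and `c` a set of columns on which these rows form an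
  -- invertible minor `M`; `g` is the Cramer solution of `M y = det M • 1`, extended by zero.
  obtain ⟨s, -, -, hspan, hli⟩ := exists_linearIndepOn_extension
    (linearIndepOn_empty K (W.map (Int.cast : ℤ → K)).row) (Set.empty_subset Set.univ)
  rw [Set.image_univ] at hspan
  have : Fintype s := @Fintype.ofFinite _ hli.finite
  obtain ⟨c, hc⟩ := exists_isUnit_submatrix_of_linearIndependent
    (A := (W.map (Int.cast : ℤ → K)).submatrix ((↑) : s → ι) id) hli
  let M : Matrix s s ℤ := W.submatrix (↑) c
  have hd : M.det ≠ 0 := by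
    rw [isUnit_iff_isUnit_det, isUnit_iff_ne_zero] at hc
    exact_mod_cast (Int.cast_det (R := K) M).trans_ne hc
  let g : n → ℤ := Function.extend c (M.cramer 1) 0
  have hrows : ∀ i ∈ s, (W *ᵥ g) i = M.det := fun i hi => by
    rw [mulVec_extend_zero]
    exact (congrFun (mulVec_cramer M 1) ⟨i, hi⟩).trans (by simp)
  have hy : ∀ i, |M.cramer 1 i| ≤ (Fintype.card n)! * N ^ Fintype.card n := fun i => by
    have := Fintype.card_le_of_embedding c
    calc |M.cramer 1 i| ≤ (Fintype.card s)! * (N : ℤ) ^ Fintype.card s :=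
          abs_cramer_apply_le (fun _ _ => hW _ _) (fun _ => by simpa using hN) i
      _ ≤ _ := by gcongr; exact_mod_cast hN
  refine ⟨g, M.det, hd, fun j => ?_, ?_⟩
  · by_cases hj : j ∈ Set.range c
    · obtain ⟨i, rfl⟩ := hj
      simpa only [g, c.injective.extend_apply] using hy i
    · simp only [g, Function.extend_apply' _ _ _ hj, Pi.zero_apply, abs_zero]
      positivity
  · have hcast : ∀ i, (W.map Int.cast *ᵥ Int.cast ∘ g) i = ((W *ᵥ g) i : K) := fun i =>
      (RingHom.map_mulVec (Int.castRingHom K) W g i).symm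
    have hK := mulVec_eq_smul_one_of_subset_span hspan hp (x := Int.cast ∘ g) (d := (M.det : K))
      fun i hi => by rw [hcast, hrows i hi]
    ext i
    have := congrFun hK i
    rw [hcast] at this
    simpa using this

theorem exists_mem_stdSimplex_norm_sq_le_inner {ι E : Type*} [Fintype ι] [Nonempty ι]
    [NormedAddCommGroup E] [InnerProductSpace ℝ E] (V : ι → E) :
    ∃ A ∈ stdSimplex ℝ ι, ∀ i, ‖∑ j, A j • V j‖ ^ 2 ≤ ⟪∑ j, A j • V j, V i⟫ := by
  classical
  let f := Fintype.linearCombination ℝ V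
  have hK : IsCompact (f '' stdSimplex ℝ ι) :=
    (isCompact_stdSimplex ℝ ι).image (LinearMap.continuous_of_finiteDimensional f)
  have hconv : Convex ℝ (f '' stdSimplex ℝ ι) := (convex_stdSimplex ℝ ι).linear_image f
  obtain ⟨p, ⟨A, hA, rfl⟩, hmin⟩ := exists_norm_eq_iInf_of_complete_convex
    ((Set.nonempty_coe_sort.mp inferInstance).image f) hK.isComplete hconv 0
  refine ⟨A, hA, fun i => ?_⟩
  have := (norm_eq_iInf_iff_real_inner_le_zero hconv ⟨A, hA, rfl⟩).mp hmin (V i)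
    ⟨Pi.single i 1, single_mem_stdSimplex ℝ i, by simp [f]⟩
  rw [Fintype.linearCombination_apply] at this
  rw [← real_inner_self_eq_norm_sq]
  simpa [inner_sub_right] using this

theorem inner_eq_norm_sq_of_mem_stdSimplex {ι E : Type*} [Fintype ι]
    [NormedAddCommGroup E] [InnerProductSpace ℝ E] {V : ι → E} {A : ι → ℝ}
    (hA : A ∈ stdSimplex ℝ ι) (hV : ∀ i, ‖∑ j, A j • V j‖ ^ 2 ≤ ⟪∑ j, A j • V j, V i⟫)
    {i : ι} (hi : A i ≠ 0) : ⟪∑ j, A j • V j, V i⟫ = ‖∑ j, A j • V j‖ ^ 2 := by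
  set p := ∑ j, A j • V j
  have hsum : ∑ j, A j * (⟪p, V j⟫ - ‖p‖ ^ 2) = 0 := by
    calc ∑ j, A j * (⟪p, V j⟫ - ‖p‖ ^ 2)
        = ⟪p, p⟫ - (∑ j, A j) * ‖p‖ ^ 2 := by
          simp only [mul_sub, Finset.sum_sub_distrib, Finset.sum_mul, p, inner_sum,
            inner_smul_right]
      _ = 0 := by rw [hA.2, one_mul, real_inner_self_eq_norm_sq, sub_self]
  have := (Finset.sum_eq_zero_iff_of_nonneg fun j _ => mul_nonneg (hA.1 j)
    (sub_nonneg.mpr (hV j))).mp hsum i (Finset.mem_univ i)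
  linarith [(mul_eq_zero.mp this).resolve_left hi]

theorem inner_sum_smul_eq_of_mem_stdSimplex {ι E : Type*} [Fintype ι]
    [NormedAddCommGroup E] [InnerProductSpace ℝ E] {V : ι → E} {A : ι → ℝ}
    (hA : A ∈ stdSimplex ℝ ι) {x : E} {c : ℝ} (hc : ∀ j, A j ≠ 0 → ⟪V j, x⟫ = c) :
    ⟪∑ j, A j • V j, x⟫ = c := calc
  ⟪∑ j, A j • V j, x⟫ = ∑ j, A j * c := by
    rw [sum_inner]
    refine Finset.sum_congr rfl fun j _ => ?_
    rw [real_inner_smul_left]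
    by_cases hj : A j = 0
    · simp [hj]
    · rw [hc j hj]
  _ = c := by rw [← Finset.sum_mul, hA.2, one_mul]

theorem EuclideanSpace.abs_sum_mul_le {n : Type*} [Fintype n] {g : n → ℝ} {B : ℝ}
    (hg : ∀ t, |g t| ≤ B) (p : EuclideanSpace ℝ n) :
    |∑ t, g t * p t| ≤ Fintype.card n * B * ‖p‖ := calc
  |∑ t, g t * p t| ≤ ∑ _t : n, B * ‖p‖ := by
    refine (Finset.abs_sum_le_sum_abs _ _).trans (Finset.sum_le_sum fun t _ => ?_)
    rw [abs_mul]
    exact mul_le_mul (hg t) (PiLp.norm_apply_le p t) (abs_nonneg _)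
      ((abs_nonneg _).trans (hg t))
  _ = Fintype.card n * B * ‖p‖ := by simp [mul_assoc]

theorem exists_norm_sq_le_sum_mul_and_one_le_mul_norm {ι : Type*} [Fintype ι] [Nonempty ι]
    {k N : ℕ} {v : ι → Fin k → ℤ} (hN : 1 ≤ N) (hv : ∀ i t, |v i t| ≤ N)
    (h : ∃ lam0 : Fin k → ℝ, ∀ i, ∑ t, (v i t : ℝ) * lam0 t < 0) :
    ∃ p : EuclideanSpace ℝ (Fin k),
      (∀ i, ‖p‖ ^ 2 ≤ ∑ t, (v i t : ℝ) * p t) ∧ 1 ≤ k * (k ! * N ^ k) * ‖p‖ := by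
  obtain ⟨lam0, hlam0⟩ := h
  let V : ι → EuclideanSpace ℝ (Fin k) := fun i => WithLp.toLp 2 (Int.cast ∘ v i)
  have hV : ∀ i x, ⟪x, V i⟫ = ∑ t, (v i t : ℝ) * x t := fun i x => rfl
  obtain ⟨A, hA, hAV⟩ := exists_mem_stdSimplex_norm_sq_le_inner V
  set p := ∑ j, A j • V j
  refine ⟨p, hAV, ?_⟩
  have hp : ⟪WithLp.toLp 2 lam0, p⟫ < 0 :=
    (convex_halfSpace_lt (innerSL ℝ (WithLp.toLp 2 lam0)).toLinearMap.isLinear 0).sum_mem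
      (fun j _ => hA.1 j) hA.2 fun j _ => (hV j _).trans_lt (hlam0 j)
  have hQ : 0 < ‖p‖ ^ 2 := by
    have : p ≠ 0 := fun h0 => by simp [h0] at hp
    positivity
  obtain ⟨g, d, hd, hg, hWg⟩ := exists_int_mulVec_eq_smul_one (K := ℝ)
    (W := of fun i : {i // A i ≠ 0} => v i) hN (fun i t => hv i t)
    ⟨fun t => p t / ‖p‖ ^ 2, funext fun i => by
      simp only [mulVec, dotProduct, map_apply, of_apply, mul_div_assoc', ← Finset.sum_div,
        Pi.one_apply]
      rw [← hV, inner_eq_norm_sq_of_mem_stdSimplex hA hAV i.2, div_self hQ.ne']⟩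
  simp only [Fintype.card_fin] at hg
  have hgp : ⟪p, WithLp.toLp 2 (Int.cast ∘ g)⟫ = d :=
    inner_sum_smul_eq_of_mem_stdSimplex hA fun j hj => by
      have hj' : ∑ t, v j t * g t = d := (congrFun hWg ⟨j, hj⟩).trans (by simp)
      rw [real_inner_comm, hV, ← hj']
      push_cast
      rfl
  calc (1 : ℝ) ≤ |(d : ℝ)| := by exact_mod_cast Int.one_le_abs hd
    _ = |∑ t, (g t : ℝ) * p t| := by rw [← hgp]; rfl
    _ ≤ _ := by
      simpa using EuclideanSpace.abs_sum_mul_le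
        (fun t => (by exact_mod_cast hg t : |(g t : ℝ)| ≤ k ! * N ^ k)) p

theorem exists_bounded_sum_mul_le_neg_one {ι : Type*} [Fintype ι] [Nonempty ι] {k N : ℕ}
    {v : ι → Fin k → ℤ} (hN : 1 ≤ N) (hv : ∀ i t, |v i t| ≤ N)
    (h : ∃ lam0 : Fin k → ℝ, ∀ i, ∑ t, (v i t : ℝ) * lam0 t < 0) :
    ∃ μ : Fin k → ℝ, (∀ i, ∑ t, (v i t : ℝ) * μ t ≤ -1) ∧ ∀ t, |μ t| ≤ k * (k ! * N ^ k) := by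
  obtain ⟨p, hp, hp1⟩ := exists_norm_sq_le_sum_mul_and_one_le_mul_norm hN hv h
  have hp0 : 0 < ‖p‖ := (norm_nonneg p).lt_of_ne fun h0 => by
    rw [← h0, mul_zero] at hp1
    exact absurd hp1 (by norm_num)
  have hQ : 0 < ‖p‖ ^ 2 := by positivity
  refine ⟨fun t => -p t / ‖p‖ ^ 2, fun i => ?_, fun t => ?_⟩
  · have : ∑ t, (v i t : ℝ) * (-p t / ‖p‖ ^ 2) = -((∑ t, (v i t : ℝ) * p t) / ‖p‖ ^ 2) := by
      simp only [mul_div_assoc', mul_neg, Finset.sum_div, Finset.sum_neg_distrib, neg_div]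
    rw [this, neg_le_neg_iff, le_div_iff₀ hQ, one_mul]
    exact hp i
  · calc |-p t / ‖p‖ ^ 2| = |p t| / ‖p‖ ^ 2 := by rw [abs_div, abs_neg, abs_of_pos hQ]
      _ ≤ ‖p‖ / ‖p‖ ^ 2 := by gcongr; exact PiLp.norm_apply_le p t
      _ = 1 / ‖p‖ := by field_simp
      _ ≤ k * (k ! * N ^ k) := by rw [div_le_iff₀ hp0]; exact hp1

theorem abs_round_le_of_abs_le {α : Type*} [Field α] [LinearOrder α] [IsStrictOrderedRing α]
    [FloorRing α] {x : α} {B : ℤ} (h : |x| ≤ B) : |round x| ≤ B := by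
  have h1 : ((|round x| : ℤ) : α) < B + 1 := by
    have := abs_sub_round x
    rw [Int.cast_abs]
    linarith [abs_sub_abs_le_abs_sub (round x : α) x, abs_sub_comm x (round x)]
  exact Int.lt_add_one_iff.mp (by exact_mod_cast h1)

theorem sum_mul_round_le_neg_one {k N : ℕ} {v : Fin k → ℤ} (hv : ∀ t, |v t| ≤ N)
    (hkN : 1 ≤ k * N) {μ : Fin k → ℝ} (hμ : ∑ t, (v t : ℝ) * μ t ≤ -1) :
    ∑ t, v t * round ((k * N : ℝ) * μ t) ≤ -1 := by
  set c : ℝ := k * N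
  have herr : ∑ t, (v t : ℝ) * (round (c * μ t) - c * μ t) ≤ c / 2 := calc
    _ ≤ ∑ _t : Fin k, (N : ℝ) * (1 / 2) := Finset.sum_le_sum fun t _ => by
        refine (le_abs_self _).trans ?_
        rw [abs_mul, abs_sub_comm]
        exact mul_le_mul (by exact_mod_cast hv t) (abs_sub_round _) (abs_nonneg _) (by positivity)
    _ = c / 2 := by simp [c]; ring
  have hsplit : ∑ t, (v t : ℝ) * round (c * μ t)
      = ∑ t, (v t : ℝ) * (round (c * μ t) - c * μ t) + c * ∑ t, (v t : ℝ) * μ t := by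
    rw [Finset.mul_sum, ← Finset.sum_add_distrib]
    exact Finset.sum_congr rfl fun t _ => by ring
  have hc : (1 : ℝ) ≤ c := by simp only [c]; exact_mod_cast hkN
  have : ((∑ t, v t * round (c * μ t) : ℤ) : ℝ) < 0 := by
    push_cast
    have := mul_le_mul_of_nonneg_left hμ (by linarith : 0 ≤ c)
    linarith
  have := Int.cast_lt_zero.mp this
  omega

theorem stmt_4 {m k : ℕ} (N : ℕ) (v : Fin m → Fin k → ℤ)
    (hv : ∀ i t, |v i t| ≤ (N : ℤ))
    (h : ∃ lam0 : Fin k → ℝ, ∀ i, ∑ t, (v i t : ℝ) * lam0 t < 0) :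
    ∃ lam : Fin k → ℤ, (∀ t, |lam t| ≤ ((k * N : ℕ) : ℤ) ^ (k + 1)) ∧
      ∀ i, ∑ t, v i t * lam t ≤ -1 := by
  rcases isEmpty_or_nonempty (Fin m) with hm | hm
  · exact ⟨0, fun t => by simp only [Pi.zero_apply, abs_zero]; positivity, isEmptyElim⟩
  obtain ⟨i₀⟩ := id hm
  obtain ⟨t₀, ht₀⟩ : ∃ t, v i₀ t ≠ 0 := by
    by_contra! h0
    obtain ⟨lam0, hlam0⟩ := h
    simpa [h0] using hlam0 i₀
  have hN : 1 ≤ N := by exact_mod_cast (Int.one_le_abs ht₀).trans (hv i₀ t₀)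
  have hkN : 1 ≤ k * N := Nat.mul_pos t₀.pos hN
  obtain ⟨μ, hμ, hμ_le⟩ := exists_bounded_sum_mul_le_neg_one hN hv h
  refine ⟨fun t => round ((k * N : ℝ) * μ t), fun t => abs_round_le_of_abs_le ?_,
    fun i => sum_mul_round_le_neg_one (hv i) hkN (hμ i)⟩
  have hnat : k * N * (k * (k ! * N ^ k)) ≤ (k * N) ^ (k + 1) := calc
    _ = k * k ! * (k * N) * N ^ k := by ring
    _ ≤ k ^ k * (k * N) * N ^ k := by gcongr; exact Nat.mul_factorial_le_pow k
    _ = (k * N) ^ (k + 1) := by ring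
  calc |(k * N : ℝ) * μ t| = k * N * |μ t| := by rw [abs_mul, abs_of_nonneg (by positivity)]
    _ ≤ k * N * (k * (k ! * N ^ k)) := by gcongr; exact hμ_le t
    _ ≤ _ := by exact_mod_cast hnat
end

section
/- Let w : E → ℝ^k assign weight vectors to edges of a finite directed graph, and let λ ∈ ℝ^k be strictly positive in every coordinate. If an infinite path π satisfies LimSup of the averages of the one-dimensional weights w(e)·λ being negative (i.e., there is c > 0 with infinitely many prefixes of average λ-weight ≤ -c), then there exists a dimension i such that the lim inf of the average of the i-th coordinate weights along π is negative. -/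
theorem stmt_5 {E : Type*} {k : ℕ} (w : E → Fin k → ℝ) (W : ℝ)
    (hW : ∀ e i, |w e i| ≤ W)
    (lam : Fin k → ℝ) (hlam : ∀ i, 0 < lam i)
    (π : ℕ → E)
    (h : ∃ c > (0 : ℝ), ∀ N : ℕ, ∃ t, N ≤ t ∧ 1 ≤ t ∧
      (∑ j ∈ Finset.range t, ∑ i, w (π j) i * lam i) / t ≤ -c) :
    ∃ i : Fin k, Filter.liminf
      (fun t : ℕ => (∑ j ∈ Finset.range t, w (π j) i) / t) Filter.atTop < 0 := by
  by_contra hcon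
  push_neg at hcon
  obtain ⟨c, hc0, hN⟩ := h
  have hk : 0 < k := by
    rcases Nat.eq_zero_or_pos k with hk | hk
    · exfalso
      subst hk
      obtain ⟨t, _, ht1, hle⟩ := hN 0
      simp only [Finset.univ_eq_empty, Finset.sum_empty, Finset.sum_const_zero,
        zero_div] at hle
      linarith
    · exact hk
  have hW0 : 0 ≤ W := le_trans (abs_nonneg _) (hW (π 0) ⟨0, hk⟩)
  set a : Fin k → ℕ → ℝ := fun i t => (∑ j ∈ Finset.range t, w (π j) i) / t with ha
  have hbound : ∀ i t, -W ≤ a i t := by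
    intro i t
    rcases Nat.eq_zero_or_pos t with h0 | ht
    · simp only [ha, h0, Finset.range_zero, Finset.sum_empty, Nat.cast_zero, div_zero]
      linarith
    · have htpos : (0:ℝ) < t := by exact_mod_cast ht
      rw [ha]
      rw [le_div_iff₀ htpos]
      have h1 : ∀ j ∈ Finset.range t, -W ≤ w (π j) i := fun j _ =>
        (abs_le.mp (hW (π j) i)).1
      calc -W * t = ∑ _j ∈ Finset.range t, (-W) := by
            simp [Finset.sum_const, Finset.card_range, mul_comm]
        _ ≤ ∑ j ∈ Finset.range t, w (π j) i := Finset.sum_le_sum h1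
  set S : ℝ := ∑ i, lam i with hS
  have hSpos : 0 < S := Finset.sum_pos (fun i _ => hlam i) (by
    simpa using Finset.univ_nonempty_iff.mpr ⟨⟨0, hk⟩⟩)
  set ε : ℝ := c / S with hε
  have hεpos : 0 < ε := div_pos hc0 hSpos
  have hev : ∀ i : Fin k, ∀ᶠ t in Filter.atTop, -ε < a i t := by
    intro i
    refine Filter.eventually_lt_of_lt_liminf ?_ ?_
    · exact lt_of_lt_of_le (by linarith) (hcon i)
    · exact Filter.isBoundedUnder_of ⟨-W, fun t => hbound i t⟩
  have hall : ∀ᶠ t in Filter.atTop, ∀ i : Fin k, -ε < a i t :=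
    Filter.eventually_all.mpr hev
  obtain ⟨M, hM⟩ := Filter.eventually_atTop.mp hall
  obtain ⟨t, htM, ht1, hle⟩ := hN M
  have htpos : (0:ℝ) < t := by exact_mod_cast ht1
  have heq : (∑ j ∈ Finset.range t, ∑ i, w (π j) i * lam i) / t
      = ∑ i, a i t * lam i := by
    rw [Finset.sum_comm, Finset.sum_div]
    congr 1
    ext i
    simp only [ha]
    rw [← Finset.sum_mul]
    ring
  have hgt : -c < ∑ i, a i t * lam i := by
    have h1 : ∑ i, (-ε) * lam i < ∑ i, a i t * lam i := by
      refine Finset.sum_lt_sum_of_nonempty (Finset.univ_nonempty_iff.mpr ⟨⟨0, hk⟩⟩) ?_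
      intro i _
      exact mul_lt_mul_of_pos_right (hM t htM i) (hlam i)
    have h2 : ∑ i, (-ε) * lam i = -c := by
      rw [← Finset.mul_sum, ← hS, hε, neg_mul, div_mul_cancel₀ _ (ne_of_gt hSpos)]
    linarith
  rw [heq] at hle
  linarith
end

section
/- Parity-to-multidimensional-mean-payoff weight construction, player-1 side: Let C be a cycle in a finite graph with n vertices whose edges carry priorities in {1,...,k}, and define for each dimension i the weight w_i(e) = 0 if p(e) > i, w_i(e) = -1 if p(e) ≤ i and p(e) is odd, w_i(e) = n if p(e) ≤ i and p(e) is even. If the minimum priority on C is even, then w_i(C) ≥ 0 for every dimension i ∈ {1,...,k}. -/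
theorem stmt_9 {E : Type*} (n k : ℕ) (p : E → ℕ)
    (C : List E) (hlen : C.length ≤ n)
    (hp : ∀ e ∈ C, 1 ≤ p e ∧ p e ≤ k)
    (mp : ℕ) (hmp_le : ∀ e ∈ C, mp ≤ p e) (hmp_mem : ∃ e ∈ C, p e = mp)
    (hmp_even : Even mp) :
    ∀ i, 1 ≤ i → i ≤ k →
      0 ≤ (C.map (fun e =>
        if i < p e then (0 : ℤ) else if Odd (p e) then -1 else (n : ℤ))).sum := by
  intro i hi1 hik
  set f : E → ℤ := fun e =>
    if i < p e then (0 : ℤ) else if Odd (p e) then -1 else (n : ℤ) with hf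
  by_cases hcase : i < mp
  · -- all terms are 0
    have : ∀ x ∈ C.map f, x = 0 := by
      intro x hx
      rcases List.mem_map.1 hx with ⟨e, he, rfl⟩
      have : i < p e := lt_of_lt_of_le hcase (hmp_le e he)
      simp [hf, this]
    rw [List.sum_eq_zero this]
  · push_neg at hcase
    obtain ⟨e₀, he₀, hpe₀⟩ := hmp_mem
    -- f e₀ = n
    have hfe₀ : f e₀ = (n : ℤ) := by
      have h1 : ¬ i < p e₀ := by omega
      have h2 : ¬ Odd (p e₀) := by
        rw [hpe₀]; simpa using hmp_even
      simp [hf, h1, h2]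
    -- consider g = f + 1, nonneg
    have hg : ∀ x ∈ C.map (fun e => f e + 1), 0 ≤ x := by
      intro x hx
      rcases List.mem_map.1 hx with ⟨e, he, rfl⟩
      by_cases h1 : i < p e
      · simp [hf, h1]
      · by_cases h2 : Odd (p e)
        · simp [hf, h1, h2]
        · simp [hf, h1, h2]; positivity
    have hmem : f e₀ + 1 ∈ C.map (fun e => f e + 1) :=
      List.mem_map.2 ⟨e₀, he₀, rfl⟩
    have hsingle := List.single_le_sum hg _ hmem
    have hsum : (C.map (fun e => f e + 1)).sum = (C.map f).sum + C.length := by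
      induction C with
      | nil => simp
      | cons a t ih => simp [ih]; ring
    have hlen' : (C.length : ℤ) ≤ (n : ℤ) := by exact_mod_cast hlen
    rw [hsum, hfe₀] at hsingle
    omega
end

section
/- Parity-to-multidimensional-mean-payoff weight construction, player-2 side: With the weight function w_i(e) = 0 if p(e) > i, -1 if p(e) ≤ i odd, n if p(e) ≤ i even, let C be a simple cycle (length ≤ n) whose minimal priority i is odd, and let ℓ = n², λ = (ℓ^{k-1}, ℓ^{k-2}, ..., ℓ^0). Then the λ-weighted total weight of C satisfies w(C)ᵀ·λ ≤ -ℓ^{k-i} + (ℓ-1)·∑_{j=i+1}^{k} ℓ^{k-j} < 0. -/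
/-!
With `ℓ = n²` the vector `λ = (ℓ^{k-1}, …, ℓ^0)` weighs the dimensions lexicographically. On a
cycle whose minimal priority `i` is odd, every dimension `d < i` sums to `0`, dimension `i` sums to
at most `-1` (edges of priority `i` weigh `-1`, all others `0`), and every dimension `d > i` sums
to at most `n (|C| - 1) - 1 < ℓ`, because an edge of priority `i` still weighs `-1` there. Since
`(ℓ - 1) ∑_{j=i+1}^{k} ℓ^{k-j} = ℓ^{k-i} - 1`, the resulting bound equals `-1`.
-/

open Finset

theorem List.sum_le_add_length_sub_one_nsmul {M : Type*} [AddCommMonoid M] [PartialOrder M]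
    [IsOrderedAddMonoid M] [DecidableEq M] {l : List M} {a c : M} (ha : a ∈ l)
    (h : ∀ x ∈ l, x ≤ c) : l.sum ≤ a + (l.length - 1) • c := by
  rw [← List.sum_erase ha, ← List.length_erase_of_mem ha]
  exact add_le_add_right
    (List.sum_le_card_nsmul _ _ fun x hx => h x (List.mem_of_mem_erase hx)) a

theorem Finset.sum_Icc_one_eq_sum_Ico_add_add_sum_Icc {M : Type*} [AddCommMonoid M]
    (f : ℕ → M) {i k : ℕ} (hi : 1 ≤ i) (hik : i ≤ k) :
    ∑ d ∈ Icc 1 k, f d = ∑ d ∈ Ico 1 i, f d + f i + ∑ d ∈ Icc (i + 1) k, f d := by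
  rw [← Ico_add_one_right_eq_Icc, ← Ico_add_one_right_eq_Icc,
    ← sum_Ico_consecutive f hi (by omega : i ≤ k + 1),
    sum_eq_sum_Ico_succ_bot (by omega : i < k + 1), add_assoc]

theorem sub_one_mul_sum_Icc_pow_sub {R : Type*} [CommRing R] (x : R) (i k : ℕ) :
    (x - 1) * ∑ j ∈ Icc (i + 1) k, x ^ (k - j) = x ^ (k - i) - 1 := by
  rw [← Ico_add_one_right_eq_Icc, sum_Ico_reflect (x ^ ·) (i + 1) le_rfl,
    Nat.sub_self, ← range_eq_Ico, mul_comm, Nat.add_sub_add_right, geom_sum_mul]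

section Lex

variable {R : Type*} [CommRing R] [LinearOrder R] [IsStrictOrderedRing R]

theorem sum_Icc_mul_pow_le {ℓ : R} (hℓ : 0 ≤ ℓ) {S : ℕ → R} {i k : ℕ} (hi : 1 ≤ i)
    (hik : i ≤ k) (h_lt : ∀ d < i, S d = 0) (h_eq : S i ≤ -1) (h_gt : ∀ d, i < d → S d ≤ ℓ - 1) :
    ∑ d ∈ Icc 1 k, S d * ℓ ^ (k - d) ≤
      -ℓ ^ (k - i) + (ℓ - 1) * ∑ j ∈ Icc (i + 1) k, ℓ ^ (k - j) := by
  rw [sum_Icc_one_eq_sum_Ico_add_add_sum_Icc _ hi hik, mul_sum,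
    sum_eq_zero fun d hd => by rw [h_lt d (mem_Ico.1 hd).2, zero_mul], zero_add]
  gcongr with d hd
  · rw [← neg_one_mul]
    exact mul_le_mul_of_nonneg_right h_eq (pow_nonneg hℓ _)
  · exact h_gt d (mem_Icc.1 hd).1

theorem neg_pow_add_sub_one_mul_sum_Icc_pow_neg (ℓ : R) (i k : ℕ) :
    -ℓ ^ (k - i) + (ℓ - 1) * ∑ j ∈ Icc (i + 1) k, ℓ ^ (k - j) < 0 := by
  rw [sub_one_mul_sum_Icc_pow_sub]
  linarith

end Lex

section ParityWeight

variable {E : Type*} (n : ℕ) (p : E → ℕ)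

/-- The paper's weight `w_d(e)` of dimension `d`. -/
def parityWeight (d : ℕ) (e : E) : ℤ :=
  if d < p e then 0 else if Odd (p e) then -1 else n

variable {n p}

theorem parityWeight_le (d : ℕ) (e : E) : parityWeight n p d e ≤ n := by
  unfold parityWeight
  split_ifs <;> omega

theorem parityWeight_eq_neg_one {d : ℕ} {e : E} (hd : p e ≤ d) (he : Odd (p e)) :
    parityWeight n p d e = -1 := by
  simp [parityWeight, hd.not_gt, he]

theorem sum_map_parityWeight_of_lt {C : List E} {i d : ℕ} (hmin : ∀ e ∈ C, i ≤ p e)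
    (hd : d < i) : (C.map (parityWeight n p d)).sum = 0 :=
  List.sum_eq_zero fun x hx => by
    obtain ⟨e, he, rfl⟩ := List.mem_map.1 hx
    simp [parityWeight, hd.trans_le (hmin e he)]

theorem sum_map_parityWeight_min_le {C : List E} {i : ℕ} (hodd : Odd i)
    (hmin : ∀ e ∈ C, i ≤ p e) (hmem : ∃ e ∈ C, p e = i) :
    (C.map (parityWeight n p i)).sum ≤ -1 := by
  obtain ⟨e₀, he₀, rfl⟩ := hmem
  have hle : ∀ x ∈ C.map (parityWeight n p (p e₀)), x ≤ 0 := by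
    refine List.forall_mem_map.2 fun e he => ?_
    rcases (hmin e he).lt_or_eq with hlt | heq
    · simp [parityWeight, hlt]
    · rw [parityWeight_eq_neg_one heq.ge (heq ▸ hodd)]
      norm_num
  have h := List.sum_le_add_length_sub_one_nsmul (List.mem_map_of_mem he₀) hle
  rwa [parityWeight_eq_neg_one le_rfl hodd, nsmul_zero, add_zero] at h

theorem sum_map_parityWeight_le {C : List E} (hlen : C.length ≤ n) {d : ℕ}
    (hmem : ∃ e ∈ C, p e ≤ d ∧ Odd (p e)) :
    (C.map (parityWeight n p d)).sum ≤ (n : ℤ) ^ 2 - 1 := by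
  obtain ⟨e₀, he₀, hd, hodd⟩ := hmem
  have h := List.sum_le_add_length_sub_one_nsmul
    (List.mem_map_of_mem (f := parityWeight n p d) he₀) (c := (n : ℤ)) (by simp [parityWeight_le])
  rw [parityWeight_eq_neg_one hd hodd, List.length_map, nsmul_eq_mul] at h
  have : ((C.length - 1 : ℕ) : ℤ) ≤ n := by omega
  nlinarith

end ParityWeight

theorem stmt_10_general {E : Type*} (n k : ℕ) (p : E → ℕ)
    (C : List E) (hlen : C.length ≤ n)
    (i : ℕ) (hik : i ≤ k) (hodd : Odd i)
    (hmin : ∀ e ∈ C, i ≤ p e) (hmem : ∃ e ∈ C, p e = i) :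
    (∑ d ∈ Finset.Icc 1 k,
        (C.map (fun e =>
          if d < p e then (0 : ℤ) else if Odd (p e) then -1 else (n : ℤ))).sum *
          ((n : ℤ) ^ 2) ^ (k - d))
      ≤ -((n : ℤ) ^ 2) ^ (k - i) +
          ((n : ℤ) ^ 2 - 1) * ∑ j ∈ Finset.Icc (i + 1) k, ((n : ℤ) ^ 2) ^ (k - j) ∧
    -((n : ℤ) ^ 2) ^ (k - i) +
        ((n : ℤ) ^ 2 - 1) * ∑ j ∈ Finset.Icc (i + 1) k, ((n : ℤ) ^ 2) ^ (k - j) < 0 := by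
  obtain ⟨e₀, he₀, rfl⟩ := hmem
  refine ⟨sum_Icc_mul_pow_le (S := fun d => (C.map (parityWeight n p d)).sum) (sq_nonneg _)
    hodd.pos hik (fun d hd => sum_map_parityWeight_of_lt hmin hd)
    (sum_map_parityWeight_min_le hodd hmin ⟨e₀, he₀, rfl⟩)
    (fun d hd => sum_map_parityWeight_le hlen ⟨e₀, he₀, hd.le, hodd⟩),
    neg_pow_add_sub_one_mul_sum_Icc_pow_neg _ _ _⟩

theorem stmt_10 {E : Type*} (n k : ℕ) (hn : 2 ≤ n) (p : E → ℕ)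
    (C : List E) (hlen : C.length ≤ n) (hp : ∀ e ∈ C, 1 ≤ p e ∧ p e ≤ k)
    (i : ℕ) (hi1 : 1 ≤ i) (hik : i ≤ k) (hodd : Odd i)
    (hmin : ∀ e ∈ C, i ≤ p e) (hmem : ∃ e ∈ C, p e = i) :
    (∑ d ∈ Finset.Icc 1 k,
        (C.map (fun e =>
          if d < p e then (0 : ℤ) else if Odd (p e) then -1 else (n : ℤ))).sum *
          ((n : ℤ) ^ 2) ^ (k - d))
      ≤ -((n : ℤ) ^ 2) ^ (k - i) +
          ((n : ℤ) ^ 2 - 1) * ∑ j ∈ Finset.Icc (i + 1) k, ((n : ℤ) ^ 2) ^ (k - j) ∧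
    -((n : ℤ) ^ 2) ^ (k - i) +
        ((n : ℤ) ^ 2 - 1) * ∑ j ∈ Finset.Icc (i + 1) k, ((n : ℤ) ^ 2) ^ (k - j) < 0 :=
  stmt_10_general n k p C hlen i hik hodd hmin hmem
end

section
/- Every infinite path in a pushdown system has infinitely many local minima: if π = ⟨c_1, c_2, ...⟩ is an infinite sequence of configurations (stack string, state) where consecutive stack strings differ by at most one push or pop at the top, then there exist infinitely many indices i such that the stack string α_i is a prefix of α_j for all j ≥ i. -/
theorem stmt_12 {Γ Q : Type*} (α : ℕ → List Γ) (q : ℕ → Q)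
    (hne : ∀ t, α t ≠ [])
    (hstep : ∀ t, α (t + 1) = α t ∨ (∃ x, α (t + 1) = α t ++ [x]) ∨
      (∃ x, α t = α (t + 1) ++ [x])) :
    {i : ℕ | ∀ j, i ≤ j → α i <+: α j}.Infinite := by
  -- key lemma: if α i has minimal length among all later stacks, it is a prefix of them
  have key : ∀ i, (∀ k, i ≤ k → (α i).length ≤ (α k).length) →
      ∀ j, i ≤ j → α i <+: α j := by
    intro i hmin j hij
    induction j, hij using Nat.le_induction with
    | base => exact List.prefix_rfl
    | succ j hij ih =>
      rcases hstep j with h | ⟨x, h⟩ | ⟨x, h⟩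
      · rw [h]; exact ih
      · rw [h]; exact ih.trans (List.prefix_append _ _)
      · have h1 : α (j + 1) <+: α j := by rw [h]; exact List.prefix_append _ _
        exact List.prefix_of_prefix_length_le ih h1 (hmin (j + 1) (hij.trans (Nat.le_succ j)))
  apply Set.infinite_of_forall_exists_gt
  intro n
  -- find minimal length over indices ≥ n + 1
  classical
  have hP : ∃ L, ∃ i, n + 1 ≤ i ∧ (α i).length = L := ⟨_, n + 1, le_refl _, rfl⟩
  obtain ⟨i, hi, hlen⟩ := Nat.find_spec hP
  refine ⟨i, ?_, hi⟩
  intro j hij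
  exact key i (fun k hk => by
    rw [hlen]
    exact Nat.find_min' hP ⟨k, hi.trans hk, rfl⟩) j hij
end

section
/- Consecutive local minima in a pushdown run: if c_i and c_j (i < j) are two consecutive local minima of an infinite pushdown run (no local minimum strictly between them), then either the stack strings of c_i and c_j are equal, or the stack string of c_j is obtained from that of c_i by pushing exactly one symbol. -/
private lemma dip_lemma {Γ : Type*} (α : ℕ → List Γ)
    (hstep : ∀ t, α (t + 1) = α t ∨ (∃ x, α (t + 1) = α t ++ [x]) ∨
      (∃ x, α t = α (t + 1) ++ [x]))
    (s : ℕ) (h : ∀ t, s ≤ t → (α s).length ≤ (α t).length) :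
    ∀ t, s ≤ t → α s <+: α t := by
  intro t ht
  induction t with
  | zero =>
    have : s = 0 := Nat.le_zero.mp ht
    subst this; exact List.prefix_refl _
  | succ t ih =>
    rcases Nat.lt_or_ge t s with hlt | hge
    · have : s = t + 1 := le_antisymm ht hlt
      subst this; exact List.prefix_refl _
    · have hp : α s <+: α t := ih hge
      rcases hstep t with heq | ⟨x, hpush⟩ | ⟨x, hpop⟩
      · rw [heq]; exact hp
      · rw [hpush]; exact hp.trans (List.prefix_append _ _)
      · have hpre : α (t + 1) <+: α t := by
          rw [hpop]; exact List.prefix_append _ _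
        exact List.prefix_of_prefix_length_le hp hpre (h (t + 1) (Nat.le_succ_of_le hge))

theorem stmt_13 {Γ : Type*} (α : ℕ → List Γ)
    (hne : ∀ t, α t ≠ [])
    (hstep : ∀ t, α (t + 1) = α t ∨ (∃ x, α (t + 1) = α t ++ [x]) ∨
      (∃ x, α t = α (t + 1) ++ [x]))
    (i j : ℕ) (hij : i < j)
    (hi : ∀ t, i ≤ t → α i <+: α t)
    (hj : ∀ t, j ≤ t → α j <+: α t)
    (hbetween : ∀ s, i < s → s < j → ¬ (∀ t, s ≤ t → α s <+: α t)) :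
    α j = α i ∨ ∃ x, α j = α i ++ [x] := by
  by_contra hcon
  push_neg at hcon
  obtain ⟨hne1, hne2⟩ := hcon
  set n := (α i).length with hn
  -- α i is a prefix of α j, and they differ by ≥ 2 symbols
  obtain ⟨β, hβ⟩ := hi j (le_of_lt hij)
  have hβlen : 2 ≤ β.length := by
    rcases β with _ | ⟨x, _ | ⟨y, β⟩⟩
    · exact absurd (by simpa using hβ.symm) hne1
    · exact absurd hβ.symm (hne2 x)
    · simp
  have hjlen : n + 2 ≤ (α j).length := by
    rw [← hβ] at *
    simp [hn]; omega
  -- step changes length by at most one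
  have hstep_len : ∀ t, (α (t + 1)).length ≤ (α t).length + 1 := by
    intro t
    rcases hstep t with heq | ⟨x, hpush⟩ | ⟨x, hpop⟩
    · rw [heq]; omega
    · rw [hpush]; simp
    · have := congrArg List.length hpop; simp at this; omega
  classical
  set P : ℕ → Prop := fun t => i ≤ t ∧ t < j ∧ (α t).length ≤ n + 1 with hP
  have hPi : P i := ⟨le_refl _, hij, by simp [hn]⟩
  set s := Nat.findGreatest P j with hs
  have hPs : P s := Nat.findGreatest_spec (le_of_lt hij) hPi
  obtain ⟨his, hsj, hslen⟩ := hPs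
  -- all times strictly between s and j have length ≥ n + 2
  have hbig : ∀ t, s < t → t < j → n + 2 ≤ (α t).length := by
    intro t hst htj
    have hnp : ¬ P t := Nat.findGreatest_is_greatest hst (le_of_lt htj)
    have : ¬ ((α t).length ≤ n + 1) := fun hle =>
      hnp ⟨le_trans his (le_of_lt hst), htj, hle⟩
    omega
  -- s ≠ i
  have hine : i < s := by
    rcases Nat.lt_or_ge i s with h | h
    · exact h
    · exfalso
      have hsi : s = i := le_antisymm (by omega) (by omega)
      have h1 : (α (i + 1)).length ≤ n + 1 := by
        have := hstep_len i; omega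
      rcases Nat.lt_or_ge (i + 1) j with h2 | h2
      · have := hbig (i + 1) (by omega) h2; omega
      · have : i + 1 = j := by omega
        rw [this] at h1; omega
  -- length never dips below (α s).length after s
  have hdip : ∀ t, s ≤ t → (α s).length ≤ (α t).length := by
    intro t hst
    rcases eq_or_lt_of_le hst with heq | hlt
    · rw [heq]
    · rcases Nat.lt_or_ge t j with htj | htj
      · have := hbig t hlt htj; omega
      · have := (hj t htj).length_le; omega
  exact hbetween s hine hsj (dip_lemma α hstep s hdip)
end
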